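/- arXiv:2510.13693 — 2 statements merged into one kernel-verified Lean document; each statement's English description precedes it below -/
import Mathlib

section
/- There exist sequences f₂ ∈ 𝔹₀ and g₂ : ℕ → ℝ with ∑_n |g₂(n)| < ∞ such that f₂ + g₂ ∈ 𝔹 but f₂ + g₂ ∉ 𝔸. -/
open Filter ENNReal
open scoped Classical

noncomputable section

/-- Coordinate projection onto a finite set of indices. -/
def proj (A : Finset ℕ) (f : ℕ → ℝ) : ℕ → ℝ := fun n => if n ∈ A then f n else 0

/-- Coordinate projection onto a set of indices. -/
def projSet (A : Set ℕ) (f : ℕ → ℝ) : ℕ → ℝ := fun n => if n ∈ A then f n else 0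

/-- `𝟙*_A(f) = ∑_{n ∈ A} f n`. -/
def oneStar (f : ℕ → ℝ) (A : Finset ℕ) : ℝ := ∑ n ∈ A, f n

/-- `A` is a greedy set of `f`. -/
def GreedySet (f : ℕ → ℝ) (A : Finset ℕ) : Prop :=
  ∀ n ∈ A, ∀ k, k ∉ A → |f k| ≤ |f n|

/-- `β(f,A) = sup_{I ∈ ℐ} |𝟙*_{I∖A}(f)| ∈ [0,∞]`, the sup running over all finite
integer intervals `I = [a,b]`. -/
def beta (f : ℕ → ℝ) (A : Finset ℕ) : ℝ≥0∞ :=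
  ⨆ a : ℕ, ⨆ b : ℕ, ENNReal.ofReal |oneStar f (Finset.Icc a b \ A)|

/-- `‖f‖_𝔹 = sup_{A ∈ 𝒢(f)} β(f,A) ∈ [0,∞]`. -/
def BNorm (f : ℕ → ℝ) : ℝ≥0∞ :=
  ⨆ A ∈ {A : Finset ℕ | GreedySet f A}, beta f A

/-- Membership in `𝔹`, i.e. `‖f‖_𝔹 < ∞`. -/
def MemB (f : ℕ → ℝ) : Prop := BNorm f < ⊤

/-- Membership in `c₀`. -/
def Memc0 (f : ℕ → ℝ) : Prop := Tendsto f atTop (nhds 0)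

/-- Membership in `𝔹₀`. -/
def MemB0 (f : ℕ → ℝ) : Prop :=
  Memc0 f ∧ ∀ ε : ℝ, 0 < ε → ∃ A : Finset ℕ, GreedySet f A ∧
    ∀ B : Finset ℕ, GreedySet f B → A ⊆ B → beta f B < ENNReal.ofReal ε

/-- The net `(𝟙*_A(f))_{A ∈ 𝒢(f)}`, directed by inclusion, converges to `s`. -/
def GreedyLim (f : ℕ → ℝ) (s : ℝ) : Prop :=
  ∀ ε : ℝ, 0 < ε → ∃ A : Finset ℕ, GreedySet f A ∧
    ∀ B : Finset ℕ, GreedySet f B → A ⊆ B → |oneStar f B - s| < ε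

/-- Membership in `𝔸`. -/
def MemA (f : ℕ → ℝ) : Prop := Memc0 f ∧ ∃ s, GreedyLim f s

/-- `σ_g(f)`, the greedy sum of `f` (junk value `0` if the greedy net does not converge). -/
def sigmaG (f : ℕ → ℝ) : ℝ := if h : ∃ s, GreedyLim f s then h.choose else 0

/-- `‖f‖_𝔸 = sup_{A ∈ 𝒢(f)} |σ_g(f) - 𝟙*_A(f)|`. -/
def ANorm (f : ℕ → ℝ) : ℝ≥0∞ :=
  ⨆ A ∈ {A : Finset ℕ | GreedySet f A}, ENNReal.ofReal |sigmaG f - oneStar f A|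

/-- The series `∑_n f n` converges (in the ordered sense) to `s`. -/
def SeriesLim (f : ℕ → ℝ) (s : ℝ) : Prop :=
  Tendsto (fun m => ∑ n ∈ Finset.range m, f n) atTop (nhds s)

/-- Membership in `𝒔`: the series `∑_n f n` converges. -/
def MemSeries (f : ℕ → ℝ) : Prop := ∃ s, SeriesLim f s

/-- `σ_s(f) = ∑_{n=0}^∞ f n` (junk value `0` if the series does not converge). -/
def sigmaS (f : ℕ → ℝ) : ℝ := if h : ∃ s, SeriesLim f s then h.choose else 0

/-- `‖f‖_𝒔 = sup_m |∑_{n = m}^∞ f n|`, expressed via `σ_s(f)` minus partial sums. -/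
def sNorm (f : ℕ → ℝ) : ℝ≥0∞ :=
  ⨆ m : ℕ, ENNReal.ofReal |sigmaS f - ∑ n ∈ Finset.range m, f n|

/-- `D(f)(m)`: the `m`-th term (for `m ≥ 1`) of the nonincreasing rearrangement of `|f|`,
as an element of `[0,∞]`. -/
def Drearr (f : ℕ → ℝ) (m : ℕ) : ℝ≥0∞ :=
  sInf {t : ℝ≥0∞ | {n : ℕ | t < ENNReal.ofReal |f n|}.Finite ∧
    {n : ℕ | t < ENNReal.ofReal |f n|}.ncard < m}

/-- `ρ_{1,∞}(f,k) = sup_{m ≥ 1} m · D(f)(m+k) ∈ [0,∞]`. Note `ρ_{1,∞}(f,0) = ‖f‖_{1,∞}`. -/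
def rho (f : ℕ → ℝ) (k : ℕ) : ℝ≥0∞ :=
  ⨆ m : ℕ, ⨆ _ : 1 ≤ m, (m : ℝ≥0∞) * Drearr f (m + k)

/-- Membership in `h_{1,∞}`: `lim_m m · D(f)(m) = 0`. -/
def Memh1inf (f : ℕ → ℝ) : Prop :=
  Tendsto (fun m : ℕ => (m : ℝ≥0∞) * Drearr f m) atTop (nhds 0)

/-- A sequence of nonempty finite integer intervals which is right-dominant:
`max J_k < min J_{k+1}` for all `k`. -/
def RightDominant (J : ℕ → Finset ℕ) : Prop :=
  (∀ k : ℕ, ∃ a b : ℕ, a ≤ b ∧ J k = Finset.Icc a b) ∧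
  ∀ k : ℕ, ∀ n ∈ J k, ∀ m ∈ J (k + 1), n < m

/-- `g` is Leibnizian with admissible sequence `J`. -/
def Admissible (g : ℕ → ℝ) (J : ℕ → Finset ℕ) : Prop :=
  RightDominant J ∧
  (∀ n : ℕ, g n ≠ 0 → ∃ k, n ∈ J k) ∧
  (∀ k : ℕ, oneStar g (J (k + 1)) ≤ oneStar g (J k)) ∧
  (∀ k : ℕ, ∀ n ∈ J k, g n ≠ 0 → ∀ m ∈ J (k + 1), g m < g n)

end

/-! The magnitudes of `f` are `2⁻ᵏ + 2⁻ⁿ` on the dyadic block `[2ᵏ, 2ᵏ⁺¹)`: they decrease strictly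
and the signs alternate, so the greedy sets of `f` are the initial segments and what a greedy set
misses of an interval is the tail of an alternating series; hence `f ∈ 𝔹₀`. Adding the summable `g`,
equal to `2⁻ⁿ` at odd `n`, flattens the odd terms of block `k` to `-2⁻ᵏ` and leaves the even ones
at `2⁻ᵏ + 2⁻ⁿ`. Interval sums of `f + g` stay bounded, and a greedy set of `f + g` misses at most
one block of terms of size `≤ 2¹⁻ᵏ` below its maximum, so `f + g ∈ 𝔹`. But both `[0, 2ᵏ⁺¹)` and
its union with the even terms of the next block, which add up to at least `1/2`, are greedy sets
of `f + g`, so its greedy sums do not converge. -/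

open Finset

theorem sum_range_neg_one_pow_mul_mem_Icc {u : ℕ → ℝ} (hu : Antitone u) (hu0 : 0 ≤ u)
    (m p : ℕ) : ∑ i ∈ range m, (-1) ^ i * u (p + i) ∈ Set.Icc 0 (u p) := by
  induction m generalizing p with
  | zero => exact ⟨le_rfl, hu0 p⟩
  | succ m ih =>
    obtain ⟨h0, h1⟩ := ih (p + 1)
    have hstep : ∑ i ∈ range (m + 1), (-1) ^ i * u (p + i)
        = u p - ∑ i ∈ range m, (-1) ^ i * u (p + 1 + i) := by
      rw [sum_range_succ', sub_eq_add_neg, ← sum_neg_distrib, add_comm]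
      congr 1
      · simp
      · refine sum_congr rfl fun i _ => ?_
        rw [pow_succ, show p + (i + 1) = p + 1 + i by ring]
        ring
    rw [hstep]
    exact ⟨by linarith [hu (Nat.le_succ p)], by linarith⟩

theorem abs_sum_Icc_neg_one_pow_mul_le {u : ℕ → ℝ} (hu : Antitone u) (hu0 : 0 ≤ u) (p q : ℕ) :
    |∑ n ∈ Icc p q, (-1) ^ n * u n| ≤ u p := by
  have hshift : ∑ n ∈ Icc p q, (-1) ^ n * u n
      = (-1) ^ p * ∑ i ∈ range (q + 1 - p), (-1) ^ i * u (p + i) := by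
    rw [← Ico_add_one_right_eq_Icc, sum_Ico_eq_sum_range, mul_sum]
    refine sum_congr rfl fun i _ => ?_
    ring
  obtain ⟨h0, h1⟩ := sum_range_neg_one_pow_mul_mem_Icc hu hu0 (q + 1 - p) p
  rw [hshift, abs_mul, abs_pow, abs_neg, abs_one, one_pow, one_mul, abs_of_nonneg h0]
  exact h1

theorem GreedySet.of_threshold {f : ℕ → ℝ} {A : Finset ℕ} {t : ℝ}
    (hA : ∀ n ∈ A, t ≤ |f n|) (hAc : ∀ k ∉ A, |f k| ≤ t) : GreedySet f A :=
  fun n hn k hk => (hAc k hk).trans (hA n hn)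

theorem GreedySet.mem_of_le {f : ℕ → ℝ} {A : Finset ℕ} (hf : StrictAnti fun n => |f n|)
    (hA : GreedySet f A) {m n : ℕ} (hm : m ∈ A) (hnm : n ≤ m) : n ∈ A := by
  by_contra hn
  exact (hA m hm n hn).not_gt (hf (hnm.lt_of_ne fun h => hn (h ▸ hm)))

/-- `I \ A` splits into at most `N` terms below `N` and an interval beyond `N`. -/
theorem beta_le_mul_add {f : ℕ → ℝ} {A : Finset ℕ} {N : ℕ} {t C : ℝ} (ht0 : 0 ≤ t)
    (hAN : ∀ n ∈ A, n < N) (ht : ∀ n < N, n ∉ A → |f n| ≤ t)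
    (hC : ∀ p q, N ≤ p → |∑ n ∈ Icc p q, f n| ≤ C) :
    beta f A ≤ ENNReal.ofReal (N * t + C) := by
  refine iSup₂_le fun p q => ENNReal.ofReal_le_ofReal ?_
  set S := Icc p q \ A
  have hhead : |∑ n ∈ S with n < N, f n| ≤ N * t :=
    calc |∑ n ∈ S with n < N, f n| ≤ ∑ n ∈ S with n < N, |f n| := abs_sum_le_sum_abs _ _
      _ ≤ #{n ∈ S | n < N} • t := by
          refine sum_le_card_nsmul _ _ _ fun n hn => ?_
          simp only [S, mem_filter, Finset.mem_sdiff] at hn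
          exact ht n hn.2 hn.1.2
      _ ≤ N * t := by
          rw [nsmul_eq_mul]
          refine mul_le_mul_of_nonneg_right ?_ ht0
          exact_mod_cast (card_le_card fun n hn => mem_range.2 (mem_filter.1 hn).2).trans
            (card_range N).le
  have htail : {n ∈ S | ¬ n < N} = Icc (max p N) q := by
    ext n
    simp only [S, mem_filter, Finset.mem_sdiff, mem_Icc, max_le_iff]
    constructor
    · rintro ⟨⟨⟨hp, hq⟩, -⟩, hn⟩
      exact ⟨⟨hp, not_lt.1 hn⟩, hq⟩
    · rintro ⟨⟨hp, hn⟩, hq⟩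
      exact ⟨⟨⟨hp, hq⟩, fun hA => (hAN n hA).not_ge hn⟩, not_lt.2 hn⟩
  have := hC (max p N) q (le_max_right p N)
  unfold oneStar
  rw [← sum_filter_add_sum_filter_not S (· < N), htail]
  exact (abs_add_le _ _).trans (add_le_add hhead this)

theorem not_greedyLim_of_gap {f : ℕ → ℝ} {δ : ℝ} (hδ : 0 < δ)
    (h : ∀ A : Finset ℕ, ∃ B₁ B₂, GreedySet f B₁ ∧ GreedySet f B₂ ∧ A ⊆ B₁ ∧ A ⊆ B₂ ∧
      δ ≤ oneStar f B₂ - oneStar f B₁) (s : ℝ) : ¬ GreedyLim f s := by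
  intro hs
  obtain ⟨A, -, hA⟩ := hs (δ / 2) (half_pos hδ)
  obtain ⟨B₁, B₂, hB₁, hB₂, hAB₁, hAB₂, hgap⟩ := h A
  have h₁ := abs_sub_lt_iff.1 (hA B₁ hB₁ hAB₁)
  have h₂ := abs_sub_lt_iff.1 (hA B₂ hB₂ hAB₂)
  linarith

noncomputable section

namespace Counterexample

/-- `2⁻ᵏ` on the dyadic block `[2ᵏ, 2ᵏ⁺¹)`, where block `0` is `{0, 1}`. -/
def plateau (n : ℕ) : ℝ := 2⁻¹ ^ Nat.log 2 n

def mag (n : ℕ) : ℝ := plateau n + 2⁻¹ ^ n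

def f (n : ℕ) : ℝ := (-1) ^ n * mag n

def g (n : ℕ) : ℝ := if Even n then 0 else 2⁻¹ ^ n

theorem plateau_le {j n : ℕ} (h : j ≤ Nat.log 2 n) : plateau n ≤ 2⁻¹ ^ j :=
  pow_le_pow_of_le_one (by norm_num) (by norm_num) h

theorem le_plateau {j n : ℕ} (h : n < 2 ^ (j + 1)) : 2⁻¹ ^ j ≤ plateau n :=
  pow_le_pow_of_le_one (by norm_num) (by norm_num)
    (Nat.lt_succ_iff.1 (Nat.log_lt_of_lt_pow' (Nat.succ_ne_zero j) h))

theorem strictAnti_mag : StrictAnti mag := fun m n hmn =>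
  add_lt_add_of_le_of_lt
    (pow_le_pow_of_le_one (by norm_num) (by norm_num) (Nat.log_mono_right hmn.le))
    (pow_right_strictAnti₀ (by norm_num) (by norm_num) hmn)

theorem mag_nonneg : 0 ≤ mag := fun n => by unfold mag plateau; positivity

theorem mag_le {j n : ℕ} (h : j ≤ Nat.log 2 n) : mag n ≤ 2 * 2⁻¹ ^ j := by
  have hjn : j ≤ n := h.trans (Nat.log_le_self 2 n)
  have := pow_le_pow_of_le_one (by norm_num : (0 : ℝ) ≤ 2⁻¹) (by norm_num) hjn
  unfold mag
  linarith [plateau_le h]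

theorem tendsto_mag : Tendsto mag atTop (nhds 0) := by
  have hlog : Tendsto (Nat.log 2) atTop atTop :=
    tendsto_atTop_atTop.2 fun b => ⟨2 ^ b, fun n hn => Nat.le_log_of_pow_le one_lt_two hn⟩
  have hpow : Tendsto (fun n : ℕ => (2⁻¹ : ℝ) ^ n) atTop (nhds 0) :=
    tendsto_pow_atTop_nhds_zero_of_lt_one (by norm_num) (by norm_num)
  have h := (hpow.comp hlog).add hpow
  rw [add_zero] at h
  exact h

theorem abs_f (n : ℕ) : |f n| = mag n := by
  rw [f, abs_mul, abs_pow, abs_neg, abs_one, one_pow, one_mul, abs_of_nonneg (mag_nonneg n)]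

theorem f_add_g_of_even {n : ℕ} (hn : Even n) : (f + g) n = mag n := by
  simp [f, g, hn, hn.neg_one_pow]

theorem f_add_g_of_odd {n : ℕ} (hn : Odd n) : (f + g) n = -plateau n := by
  simp [f, g, mag, Nat.not_even_iff_odd.2 hn, hn.neg_one_pow]

theorem plateau_le_abs_f_add_g (n : ℕ) : plateau n ≤ |(f + g) n| := by
  rcases Nat.even_or_odd n with hn | hn
  · rw [f_add_g_of_even hn, mag]
    exact (le_add_of_nonneg_right (by positivity)).trans (le_abs_self _)
  · rw [f_add_g_of_odd hn, abs_neg]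
    exact le_abs_self _

theorem abs_f_add_g_le_mag (n : ℕ) : |(f + g) n| ≤ mag n := by
  rcases Nat.even_or_odd n with hn | hn
  · rw [f_add_g_of_even hn, abs_of_nonneg (mag_nonneg n)]
  · rw [f_add_g_of_odd hn, abs_neg, plateau, abs_of_nonneg (by positivity), mag, plateau]
    exact le_add_of_nonneg_right (by positivity)

theorem abs_g_le (n : ℕ) : |g n| ≤ 2⁻¹ ^ n := by
  unfold g
  split_ifs <;> simp

theorem summable_abs_g : Summable fun n => |g n| :=
  summable_geometric_two.of_nonneg_of_le (fun n => abs_nonneg _) fun n => by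
    simpa using abs_g_le n

theorem abs_sum_g_le (s : Finset ℕ) : |∑ n ∈ s, g n| ≤ 2 :=
  calc |∑ n ∈ s, g n| ≤ ∑ n ∈ s, (2⁻¹ : ℝ) ^ n :=
        (abs_sum_le_sum_abs _ _).trans (sum_le_sum fun n _ => abs_g_le n)
    _ ≤ ∑' n : ℕ, (2⁻¹ : ℝ) ^ n :=
        (summable_geometric_of_lt_one (by norm_num) (by norm_num)).sum_le_tsum s
          fun n _ => by positivity
    _ = 2 := tsum_geometric_inv_two

theorem abs_sum_Icc_f_le (p q : ℕ) : |∑ n ∈ Icc p q, f n| ≤ mag p :=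
  abs_sum_Icc_neg_one_pow_mul_le strictAnti_mag.antitone mag_nonneg p q

theorem abs_sum_Icc_f_add_g_le (p q : ℕ) : |∑ n ∈ Icc p q, (f + g) n| ≤ 4 := by
  have hmag : mag p ≤ mag 0 := strictAnti_mag.antitone (Nat.zero_le p)
  have hmag0 : mag 0 = 2 := by norm_num [mag, plateau]
  simp only [Pi.add_apply, sum_add_distrib]
  linarith [abs_add_le (∑ n ∈ Icc p q, f n) (∑ n ∈ Icc p q, g n), abs_sum_Icc_f_le p q,
    abs_sum_g_le (Icc p q)]

theorem memB0_f : MemB0 f := by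
  refine ⟨squeeze_zero_norm (fun n => (abs_f n).le) tendsto_mag, fun ε hε => ?_⟩
  obtain ⟨m, hm⟩ := (tendsto_mag.eventually (gt_mem_nhds hε)).exists
  refine ⟨range (m + 1), GreedySet.of_threshold (t := mag m) ?_ ?_, fun B hB hmB => ?_⟩
  · intro n hn
    rw [abs_f]
    exact strictAnti_mag.antitone (Nat.lt_succ_iff.1 (mem_range.1 hn))
  · intro k hk
    rw [abs_f]
    exact strictAnti_mag.antitone (by simp only [mem_range, not_lt] at hk; omega)
  have hne : B.Nonempty := ⟨m, hmB (self_mem_range_succ m)⟩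
  have hmM : m ≤ B.max' hne := B.le_max' m (hmB (self_mem_range_succ m))
  have hstrict : StrictAnti fun n => |f n| := by simpa only [abs_f] using strictAnti_mag
  have hβ : beta f B ≤ ENNReal.ofReal (((B.max' hne + 1 : ℕ) : ℝ) * 0 + mag m) := by
    refine beta_le_mul_add le_rfl (fun n hn => Nat.lt_succ_of_le (B.le_max' n hn))
      (fun n hn hnB => ?_) fun p q hp => ?_
    · exact absurd (hB.mem_of_le hstrict (B.max'_mem hne) (Nat.lt_succ_iff.1 hn)) hnB
    · exact (abs_sum_Icc_f_le p q).trans (strictAnti_mag.antitone (by omega))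
  rw [mul_zero, zero_add] at hβ
  exact hβ.trans_lt ((ENNReal.ofReal_lt_ofReal_iff hε).2 hm)

theorem beta_f_add_g_le {A : Finset ℕ} (hA : GreedySet (f + g) A) :
    beta (f + g) A ≤ ENNReal.ofReal 8 := by
  rcases A.eq_empty_or_nonempty with rfl | hne
  · refine (beta_le_mul_add (N := 0) (t := 0) le_rfl (by simp) (by simp)
      fun p q _ => abs_sum_Icc_f_add_g_le p q).trans (ENNReal.ofReal_le_ofReal ?_)
    norm_num
  set M := A.max' hne
  set k := Nat.log 2 M
  have hM : M < 2 ^ (k + 1) := Nat.lt_pow_succ_log_self one_lt_two M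
  have hout : ∀ n ∉ A, |(f + g) n| ≤ 2 * 2⁻¹ ^ k := fun n hn =>
    (hA M (A.max'_mem hne) n hn).trans ((abs_f_add_g_le_mag M).trans (mag_le le_rfl))
  have hβ := beta_le_mul_add (by positivity) (fun n hn => (A.le_max' n hn).trans_lt hM)
    (fun n _ hn => hout n hn) fun p q _ => abs_sum_Icc_f_add_g_le p q
  convert hβ using 2
  push_cast
  rw [pow_succ, inv_pow]
  field_simp
  norm_num

theorem memB_f_add_g : MemB (f + g) := by
  unfold MemB BNorm
  refine (iSup₂_le fun A hA => ?_).trans_lt (ENNReal.ofReal_lt_top (r := 8))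
  exact beta_f_add_g_le hA

def evenBlock (k : ℕ) : Finset ℕ := (Ico (2 ^ k) (2 ^ (k + 1))).image (2 * ·)

theorem mem_evenBlock {k n : ℕ} :
    n ∈ evenBlock k ↔ Even n ∧ 2 ^ (k + 1) ≤ n ∧ n < 2 ^ (k + 2) := by
  simp only [evenBlock, mem_image, mem_Ico, pow_succ]
  constructor
  · rintro ⟨i, ⟨hi₁, hi₂⟩, rfl⟩
    exact ⟨even_two_mul i, by omega, by omega⟩
  · rintro ⟨⟨i, rfl⟩, hn₁, hn₂⟩
    exact ⟨i, ⟨by omega, by omega⟩, by omega⟩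

theorem card_evenBlock (k : ℕ) : #(evenBlock k) = 2 ^ k := by
  rw [evenBlock, card_image_of_injective _ (mul_right_injective₀ two_ne_zero), Nat.card_Ico,
    pow_succ]
  omega

theorem one_half_le_sum_evenBlock (k : ℕ) : 1 / 2 ≤ ∑ n ∈ evenBlock k, (f + g) n :=
  calc (1 / 2 : ℝ) = #(evenBlock k) • (2⁻¹ : ℝ) ^ (k + 1) := by
        rw [card_evenBlock, nsmul_eq_mul, pow_succ, ← mul_assoc, Nat.cast_pow, ← mul_pow]
        norm_num
    _ ≤ ∑ n ∈ evenBlock k, (f + g) n := by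
        refine card_nsmul_le_sum _ _ _ fun n hn => ?_
        obtain ⟨hev, -, hlt⟩ := mem_evenBlock.1 hn
        rw [f_add_g_of_even hev, mag]
        exact (le_plateau hlt).trans (le_add_of_nonneg_right (by positivity))

theorem greedySet_range_two_pow (k : ℕ) : GreedySet (f + g) (range (2 ^ (k + 1))) := by
  refine GreedySet.of_threshold (t := 2⁻¹ ^ k)
    (fun n hn => (le_plateau (mem_range.1 hn)).trans (plateau_le_abs_f_add_g n)) fun m hm => ?_
  have hlog : k + 1 ≤ Nat.log 2 m := Nat.le_log_of_pow_le one_lt_two (by simpa using hm)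
  calc |(f + g) m| ≤ 2 * 2⁻¹ ^ (k + 1) := (abs_f_add_g_le_mag m).trans (mag_le hlog)
    _ = 2⁻¹ ^ k := by ring

theorem greedySet_range_two_pow_union_evenBlock (k : ℕ) :
    GreedySet (f + g) (range (2 ^ (k + 1)) ∪ evenBlock k) := by
  refine GreedySet.of_threshold (t := 2⁻¹ ^ (k + 1)) (fun n hn => ?_) fun m hm => ?_
  · have hlt : n < 2 ^ (k + 2) := by
      rcases mem_union.1 hn with hn | hn
      · exact (mem_range.1 hn).trans (Nat.pow_lt_pow_right one_lt_two (by omega))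
      · exact (mem_evenBlock.1 hn).2.2
    exact (le_plateau hlt).trans (plateau_le_abs_f_add_g n)
  obtain ⟨hm₁, hm₂⟩ := not_or.1 (mt mem_union.2 hm)
  have hle : 2 ^ (k + 1) ≤ m := by simpa using hm₁
  by_cases hlt : m < 2 ^ (k + 2)
  · have hodd : Odd m := Nat.not_even_iff_odd.1 fun hev => hm₂ (mem_evenBlock.2 ⟨hev, hle, hlt⟩)
    rw [f_add_g_of_odd hodd, abs_neg, abs_of_nonneg (by unfold plateau; positivity)]
    exact plateau_le (Nat.le_log_of_pow_le one_lt_two hle)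
  · have hlog : k + 2 ≤ Nat.log 2 m := Nat.le_log_of_pow_le one_lt_two (not_lt.1 hlt)
    calc |(f + g) m| ≤ 2 * 2⁻¹ ^ (k + 2) := (abs_f_add_g_le_mag m).trans (mag_le hlog)
      _ = 2⁻¹ ^ (k + 1) := by ring

theorem not_memA_f_add_g : ¬ MemA (f + g) := by
  rintro ⟨-, s, hs⟩
  refine not_greedyLim_of_gap (δ := 1 / 2) (by norm_num) (fun A => ?_) s hs
  set k := A.sup id
  have hA : A ⊆ range (2 ^ (k + 1)) := fun n hn =>
    mem_range.2 ((le_sup (f := id) hn).trans_lt ((Nat.lt_succ_self k).trans Nat.lt_two_pow_self))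
  have hdisj : Disjoint (range (2 ^ (k + 1))) (evenBlock k) :=
    disjoint_left.2 fun n hn hnE => (mem_evenBlock.1 hnE).2.1.not_gt (mem_range.1 hn)
  refine ⟨_, _, greedySet_range_two_pow k, greedySet_range_two_pow_union_evenBlock k, hA,
    hA.trans subset_union_left, ?_⟩
  rw [oneStar, oneStar, sum_union hdisj, add_sub_cancel_left]
  exact one_half_le_sum_evenBlock k

end Counterexample

end

/-- there are `f₂ ∈ 𝔹₀` and `g₂ ∈ ℓ₁` with `f₂ + g₂ ∈ 𝔹` but
`f₂ + g₂ ∉ 𝔸`. -/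
theorem stmt_16 :
    ∃ f₂ g₂ : ℕ → ℝ, MemB0 f₂ ∧ (Summable fun n => |g₂ n|) ∧
      MemB (f₂ + g₂) ∧ ¬ MemA (f₂ + g₂) :=
  ⟨Counterexample.f, Counterexample.g, Counterexample.memB0_f, Counterexample.summable_abs_g,
    Counterexample.memB_f_add_g, Counterexample.not_memA_f_add_g⟩
end

section
/- Let f, g ∈ h_{1,∞} ∩ 𝔸. Then f + g ∈ 𝔸, σ_g(f+g) = σ_g(f) + σ_g(g), and ‖f+g‖_𝔸 ≤ 2·(‖f+g‖_{1,∞} + ‖f‖_{1,∞} + ‖g‖_{1,∞}) + ‖f‖_𝔸 + ‖g‖_𝔸. -/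
open Filter ENNReal
open scoped Classical

/-! Given a greedy set `B` of `f + g` with `|B| = N`, pick greedy sets `G` of `f` and `G'` of `g`
of the same size. Then `σ_g(f) + σ_g(g) - 𝟙*_B(f + g)` differs from
`(σ_g(f) - 𝟙*_G(f)) + (σ_g(g) - 𝟙*_{G'}(g))` by five sums, each over a set of at most `2N` indices
lying outside a greedy set of size `N` of the sequence being summed. Such an index contributes at
most the `(N+1)`-st term of the nonincreasing rearrangement, so each sum is at most
`2 (N+1) D(N+1)` (or `(N+1) D(N+1)`). This gives the norm bound, and since `(N+1) D(N+1) → 0` on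
`h_{1,∞}` (which is closed under addition) also the convergence of the greedy net of `f + g`. -/

open Finset

section Greedy

variable {f g : ℕ → ℝ}

lemma GreedySet.empty (f : ℕ → ℝ) : GreedySet f ∅ := by
  simp [GreedySet]

lemma GreedySet.union {A B : Finset ℕ} (hA : GreedySet f A) (hB : GreedySet f B) :
    GreedySet f (A ∪ B) := by
  intro n hn k hk
  rw [mem_union, not_or] at hk
  rcases mem_union.1 hn with hn | hn
  exacts [hA n hn k hk.1, hB n hn k hk.2]

lemma GreedyLim.unique {s s' : ℝ} (h : GreedyLim f s) (h' : GreedyLim f s') : s = s' := by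
  by_contra hne
  have hpos : 0 < |s - s'| / 2 := by simpa [sub_eq_zero] using hne
  obtain ⟨A, hA, hAs⟩ := h _ hpos
  obtain ⟨A', hA', hAs'⟩ := h' _ hpos
  have h₁ := hAs _ (hA.union hA') subset_union_left
  have h₂ := hAs' _ (hA.union hA') subset_union_right
  have := abs_sub_le s (oneStar f (A ∪ A')) s'
  rw [abs_sub_comm s (oneStar f (A ∪ A'))] at this
  linarith

lemma greedyLim_sigmaG (h : ∃ s, GreedyLim f s) : GreedyLim f (sigmaG f) := by
  rw [sigmaG, dif_pos h]
  exact h.choose_spec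

lemma Memc0.add (hf : Memc0 f) (hg : Memc0 g) : Memc0 (f + g) := by
  have := Tendsto.add hf hg
  rwa [add_zero] at this

lemma Memc0.exists_notMem_forall_abs_le (hf : Memc0 f) (A : Finset ℕ) :
    ∃ n ∉ A, ∀ k ∉ A, |f k| ≤ |f n| := by
  by_cases hzero : ∀ k ∉ A, f k = 0
  · obtain ⟨n, hn⟩ := A.exists_notMem
    exact ⟨n, hn, fun k hk => by simp [hzero k hk, hzero n hn]⟩
  push Not at hzero
  obtain ⟨n₁, hn₁A, hn₁⟩ := hzero
  have hfin : {k | |f n₁| ≤ |f k|}.Finite := by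
    have : ∀ᶠ k in cofinite, |f k| < |f n₁| := by
      rw [Nat.cofinite_eq_atTop]
      simpa using hf.abs.eventually (gt_mem_nhds (by simpa using abs_pos.2 hn₁))
    simpa using this
  obtain ⟨n, hn, hmax⟩ := (hfin.toFinset.filter (· ∉ A)).exists_max_image (|f ·|)
    ⟨n₁, by simp [hn₁A]⟩
  refine ⟨n, (mem_filter.1 hn).2, fun k hk => ?_⟩
  by_cases hk₁ : |f n₁| ≤ |f k|
  · exact hmax k (by simp [hk, hk₁])
  · exact (not_le.1 hk₁).le.trans (hmax n₁ (by simp [hn₁A]))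

lemma GreedySet.exists_superset_card_eq (hf : Memc0 f) {A : Finset ℕ} (hA : GreedySet f A)
    {N : ℕ} (hN : A.card ≤ N) : ∃ G, GreedySet f G ∧ A ⊆ G ∧ G.card = N := by
  induction N with
  | zero => exact ⟨A, hA, subset_rfl, Nat.le_zero.1 hN⟩
  | succ N ih =>
    rcases hN.eq_or_lt with hN | hN
    · exact ⟨A, hA, subset_rfl, hN⟩
    obtain ⟨G, hG, hAG, hGN⟩ := ih (Nat.lt_succ_iff.1 hN)
    obtain ⟨n, hnG, hn⟩ := hf.exists_notMem_forall_abs_le G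
    refine ⟨insert n G, fun m hm k hk => ?_, hAG.trans (subset_insert n G), by
      rw [card_insert_of_notMem hnG, hGN]⟩
    rw [mem_insert, not_or] at hk
    rcases mem_insert.1 hm with rfl | hm
    exacts [hn k hk.2, hG m hm k hk.2]

lemma enorm_sigmaG_sub_oneStar_le_ANorm {A : Finset ℕ} (hA : GreedySet f A) :
    ‖sigmaG f - oneStar f A‖ₑ ≤ ANorm f := by
  rw [Real.enorm_eq_ofReal_abs]
  exact le_iSup₂ (f := fun A (_ : A ∈ {A | GreedySet f A}) =>
    ENNReal.ofReal |sigmaG f - oneStar f A|) A hA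

end Greedy

section Rearrangement

variable {f g : ℕ → ℝ}

lemma Drearr_antitone (f : ℕ → ℝ) : Antitone (Drearr f) :=
  fun _ _ hmm' => sInf_le_sInf fun _ ht => ⟨ht.1, ht.2.trans_le hmm'⟩

lemma enorm_le_Drearr_card {T : Finset ℕ} {n : ℕ} (h : ∀ k ∈ T, |f n| ≤ |f k|) :
    ‖f n‖ₑ ≤ Drearr f T.card := by
  rw [Real.enorm_eq_ofReal_abs]
  refine le_sInf fun t ⟨hfin, hcard⟩ => not_lt.1 fun hlt => hcard.not_ge ?_
  calc T.card = (T : Set ℕ).ncard := (Set.ncard_coe_finset T).symm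
    _ ≤ _ := Set.ncard_le_ncard (fun k hk => hlt.trans_le (ofReal_le_ofReal (h k hk))) hfin

lemma Drearr_add_le (f g : ℕ → ℝ) (j k : ℕ) :
    Drearr (f + g) (j + k) ≤ Drearr f j + Drearr g k := by
  unfold Drearr
  rw [sInf_add]
  refine le_iInf₂ fun t ht => ?_
  rw [add_sInf]
  refine le_iInf₂ fun s hs => sInf_le ?_
  have hsub : {n | t + s < ENNReal.ofReal |(f + g) n|} ⊆
      {n | t < ENNReal.ofReal |f n|} ∪ {n | s < ENNReal.ofReal |g n|} := by
    intro n hn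
    by_contra! hle
    simp only [Set.mem_union, Set.mem_ofPred_eq, not_or, not_lt] at hle
    simp only [Set.mem_ofPred_eq, Pi.add_apply, ← Real.enorm_eq_ofReal_abs] at hn hle
    exact hn.not_ge ((enorm_add_le _ _).trans (add_le_add hle.1 hle.2))
  exact ⟨(ht.1.union hs.1).subset hsub, (Set.ncard_le_ncard hsub (ht.1.union hs.1)).trans_lt
    ((Set.ncard_union_le _ _).trans_lt (Nat.add_lt_add ht.2 hs.2))⟩

lemma Memh1inf.add (hf : Memh1inf f) (hg : Memh1inf g) : Memh1inf (f + g) := by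
  have hhalf : Tendsto (fun m : ℕ => m / 2) atTop atTop := Nat.tendsto_div_const_atTop two_ne_zero
  have hbound : Tendsto (fun m : ℕ => 3 * (((m / 2 : ℕ) : ℝ≥0∞) * Drearr f (m / 2)
      + ((m / 2 : ℕ) : ℝ≥0∞) * Drearr g (m / 2))) atTop (nhds 0) := by
    simpa using
      ENNReal.Tendsto.const_mul ((hf.comp hhalf).add (hg.comp hhalf)) (Or.inr ofNat_ne_top)
  refine tendsto_of_tendsto_of_tendsto_of_le_of_le' tendsto_const_nhds hbound
    (Eventually.of_forall fun _ => bot_le) ((eventually_ge_atTop 2).mono fun m hm => ?_)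
  have hm3 : (m : ℝ≥0∞) ≤ 3 * ((m / 2 : ℕ) : ℝ≥0∞) := by exact_mod_cast (by omega : m ≤ 3 * (m / 2))
  calc (m : ℝ≥0∞) * Drearr (f + g) m
      ≤ 3 * ((m / 2 : ℕ) : ℝ≥0∞) * (Drearr f (m / 2) + Drearr g (m / 2)) :=
        mul_le_mul' hm3 ((Drearr_antitone _ (by omega)).trans (Drearr_add_le f g _ _))
    _ = _ := by ring

lemma mul_Drearr_le_rho (f : ℕ → ℝ) {m : ℕ} (hm : 1 ≤ m) : (m : ℝ≥0∞) * Drearr f m ≤ rho f 0 :=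
  le_iSup₂_of_le (f := fun (m : ℕ) (_ : 1 ≤ m) => (m : ℝ≥0∞) * Drearr f (m + 0)) m hm le_rfl

lemma enorm_oneStar_le_of_disjoint_greedySet {G S : Finset ℕ} (hG : GreedySet f G)
    (hS : Disjoint S G) {c : ℕ} (hcard : S.card ≤ c * G.card) {C : ℝ≥0∞}
    (hC : ((G.card + 1 : ℕ) : ℝ≥0∞) * Drearr f (G.card + 1) ≤ C) :
    ‖oneStar f S‖ₑ ≤ c * C := by
  have hterm : ∀ n ∈ S, ‖f n‖ₑ ≤ Drearr f (G.card + 1) := by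
    intro n hn
    have hnG : n ∉ G := disjoint_left.1 hS hn
    rw [← card_insert_of_notMem hnG]
    refine enorm_le_Drearr_card fun k hk => ?_
    rcases mem_insert.1 hk with rfl | hk
    exacts [le_rfl, hG k hk n hnG]
  calc ‖oneStar f S‖ₑ ≤ ∑ n ∈ S, ‖f n‖ₑ := enorm_sum_le _ _
    _ ≤ S.card • Drearr f (G.card + 1) := sum_le_card_nsmul _ _ _ hterm
    _ ≤ (c * (G.card + 1) : ℕ) • Drearr f (G.card + 1) := by
        gcongr
        exact hcard.trans (Nat.mul_le_mul_left c (Nat.le_succ _))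
    _ = c * (((G.card + 1 : ℕ) : ℝ≥0∞) * Drearr f (G.card + 1)) := by
        rw [nsmul_eq_mul]; push_cast; ring
    _ ≤ c * C := by gcongr

end Rearrangement

lemma oneStar_union_sdiff (φ : ℕ → ℝ) (X Y B : Finset ℕ) :
    oneStar φ ((X ∪ Y) \ B) = oneStar φ (X \ B) + oneStar φ ((Y \ X) \ B) := by
  rw [oneStar, oneStar, oneStar, ← sum_union (disjoint_left.2 fun n hn hn' => by simp_all)]
  congr 1
  ext n
  simp only [Finset.mem_sdiff, mem_union]
  tauto

lemma sub_oneStar_add_eq (f g : ℕ → ℝ) (sf sg : ℝ) (B G G' : Finset ℕ) :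
    sf + sg - oneStar (f + g) B = (sf - oneStar f G) + (sg - oneStar g G')
      + oneStar (f + g) ((G ∪ G') \ B) - oneStar f ((G' \ G) \ B) - oneStar g ((G \ G') \ B)
      - oneStar f (B \ G) - oneStar g (B \ G') := by
  have hf := oneStar_union_sdiff f G G' B
  have hg := oneStar_union_sdiff g G' G B
  rw [union_comm G' G] at hg
  have hfB : oneStar f G - oneStar f B = oneStar f (G \ B) - oneStar f (B \ G) :=
    sum_sdiff_sub_sum_sdiff.symm
  have hgB : oneStar g G' - oneStar g B = oneStar g (G' \ B) - oneStar g (B \ G') :=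
    sum_sdiff_sub_sum_sdiff.symm
  have hadd : ∀ X, oneStar (f + g) X = oneStar f X + oneStar g X := fun X => sum_add_distrib
  rw [hadd, hadd]
  linarith

section GreedySum

variable {f g : ℕ → ℝ}

lemma enorm_sub_oneStar_add_le {B G G' : Finset ℕ} (sf sg : ℝ) (hB : GreedySet (f + g) B)
    (hG : GreedySet f G) (hG' : GreedySet g G') (hGB : G.card = B.card) (hG'B : G'.card = B.card)
    {C Cf Cg : ℝ≥0∞} (hC : ((B.card + 1 : ℕ) : ℝ≥0∞) * Drearr (f + g) (B.card + 1) ≤ C)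
    (hCf : ((B.card + 1 : ℕ) : ℝ≥0∞) * Drearr f (B.card + 1) ≤ Cf)
    (hCg : ((B.card + 1 : ℕ) : ℝ≥0∞) * Drearr g (B.card + 1) ≤ Cg) :
    ‖sf + sg - oneStar (f + g) B‖ₑ ≤
      2 * (C + Cf + Cg) + ‖sf - oneStar f G‖ₑ + ‖sg - oneStar g G'‖ₑ := by
  rw [← hGB] at hCf
  rw [← hG'B] at hCg
  have hsdiff : ∀ X Y Z : Finset ℕ, Disjoint ((X \ Y) \ Z) Y :=
    fun X Y Z => disjoint_of_subset_left sdiff_subset sdiff_disjoint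
  have h₁ : ‖oneStar (f + g) ((G ∪ G') \ B)‖ₑ ≤ (2 : ℕ) * C :=
    enorm_oneStar_le_of_disjoint_greedySet hB sdiff_disjoint
      ((card_le_card sdiff_subset).trans ((card_union_le _ _).trans (by omega))) hC
  have h₂ : ‖oneStar f ((G' \ G) \ B)‖ₑ ≤ (1 : ℕ) * Cf :=
    enorm_oneStar_le_of_disjoint_greedySet hG (hsdiff _ _ _)
      ((card_le_card (sdiff_subset.trans sdiff_subset)).trans (by omega)) hCf
  have h₃ : ‖oneStar g ((G \ G') \ B)‖ₑ ≤ (1 : ℕ) * Cg :=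
    enorm_oneStar_le_of_disjoint_greedySet hG' (hsdiff _ _ _)
      ((card_le_card (sdiff_subset.trans sdiff_subset)).trans (by omega)) hCg
  have h₄ : ‖oneStar f (B \ G)‖ₑ ≤ (1 : ℕ) * Cf :=
    enorm_oneStar_le_of_disjoint_greedySet hG sdiff_disjoint
      ((card_le_card sdiff_subset).trans (by omega)) hCf
  have h₅ : ‖oneStar g (B \ G')‖ₑ ≤ (1 : ℕ) * Cg :=
    enorm_oneStar_le_of_disjoint_greedySet hG' sdiff_disjoint
      ((card_le_card sdiff_subset).trans (by omega)) hCg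
  rw [sub_oneStar_add_eq f g sf sg B G G']
  calc _ ≤ ‖sf - oneStar f G‖ₑ + ‖sg - oneStar g G'‖ₑ + ‖oneStar (f + g) ((G ∪ G') \ B)‖ₑ
        + ‖oneStar f ((G' \ G) \ B)‖ₑ + ‖oneStar g ((G \ G') \ B)‖ₑ + ‖oneStar f (B \ G)‖ₑ
        + ‖oneStar g (B \ G')‖ₑ := by
        iterate 4 refine enorm_sub_le.trans (add_le_add_left ?_ _)
        exact (enorm_add_le _ _).trans (add_le_add_left (enorm_add_le _ _) _)
    _ ≤ ‖sf - oneStar f G‖ₑ + ‖sg - oneStar g G'‖ₑ + (2 : ℕ) * C + (1 : ℕ) * Cf + (1 : ℕ) * Cg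
        + (1 : ℕ) * Cf + (1 : ℕ) * Cg := by gcongr
    _ = _ := by push_cast; ring

lemma greedyLim_add {sf sg : ℝ} (hf₀ : Memc0 f) (hg₀ : Memc0 g) (hf : Memh1inf f)
    (hg : Memh1inf g) (hsf : GreedyLim f sf) (hsg : GreedyLim g sg) :
    GreedyLim (f + g) (sf + sg) := by
  intro ε hε
  set η := ENNReal.ofReal (ε / 9)
  have hη : 0 < η := ofReal_pos.2 (by positivity)
  obtain ⟨Af, hAf, hsfAf⟩ := hsf (ε / 9) (by positivity)
  obtain ⟨Ag, hAg, hsgAg⟩ := hsg (ε / 9) (by positivity)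
  obtain ⟨N, hN⟩ := ENNReal.tendsto_atTop_zero.1 (hf.add hg) η hη
  obtain ⟨Nf, hNf⟩ := ENNReal.tendsto_atTop_zero.1 hf η hη
  obtain ⟨Ng, hNg⟩ := ENNReal.tendsto_atTop_zero.1 hg η hη
  obtain ⟨A, hA, -, hAcard⟩ := (GreedySet.empty (f + g)).exists_superset_card_eq (hf₀.add hg₀)
    (Nat.zero_le (max (max Af.card Ag.card) (max N (max Nf Ng))))
  refine ⟨A, hA, fun B hB hAB => ?_⟩
  have hBcard := card_le_card hAB
  obtain ⟨G, hG, hAfG, hGB⟩ := hAf.exists_superset_card_eq hf₀ (N := B.card) (by omega)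
  obtain ⟨G', hG', hAgG', hG'B⟩ := hAg.exists_superset_card_eq hg₀ (N := B.card) (by omega)
  have hfG : ‖sf - oneStar f G‖ₑ ≤ η := by
    rw [Real.enorm_eq_ofReal_abs, abs_sub_comm]
    exact ofReal_le_ofReal (hsfAf G hG hAfG).le
  have hgG' : ‖sg - oneStar g G'‖ₑ ≤ η := by
    rw [Real.enorm_eq_ofReal_abs, abs_sub_comm]
    exact ofReal_le_ofReal (hsgAg G' hG' hAgG').le
  have hlt : ‖sf + sg - oneStar (f + g) B‖ₑ < ENNReal.ofReal ε :=
    calc _ ≤ 2 * (η + η + η) + η + η :=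
          (enorm_sub_oneStar_add_le sf sg hB hG hG' hGB hG'B (hN _ (by omega)) (hNf _ (by omega))
            (hNg _ (by omega))).trans (by gcongr)
      _ = ENNReal.ofReal (8 * (ε / 9)) := by
          rw [ofReal_mul (by norm_num), ofReal_ofNat]; ring
      _ < ENNReal.ofReal ε := (ofReal_lt_ofReal_iff hε).2 (by linarith)
  rwa [Real.enorm_eq_ofReal_abs, ofReal_lt_ofReal_iff hε, abs_sub_comm] at hlt

end GreedySum

/-- if `f, g ∈ h_{1,∞} ∩ 𝔸`, then `f + g ∈ 𝔸`,
`σ_g(f+g) = σ_g(f) + σ_g(g)`, and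
`‖f+g‖_𝔸 ≤ 2·(‖f+g‖_{1,∞} + ‖f‖_{1,∞} + ‖g‖_{1,∞}) + ‖f‖_𝔸 + ‖g‖_𝔸`. -/
theorem stmt_19 (f g : ℕ → ℝ) (hf : Memh1inf f ∧ MemA f) (hg : Memh1inf g ∧ MemA g) :
    MemA (f + g) ∧ sigmaG (f + g) = sigmaG f + sigmaG g ∧
    ANorm (f + g) ≤ 2 * (rho (f + g) 0 + rho f 0 + rho g 0) + ANorm f + ANorm g := by
  obtain ⟨hf, hf₀, hsf⟩ := hf
  obtain ⟨hg, hg₀, hsg⟩ := hg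
  have hlim := greedyLim_add hf₀ hg₀ hf hg (greedyLim_sigmaG hsf) (greedyLim_sigmaG hsg)
  have hsigma : sigmaG (f + g) = sigmaG f + sigmaG g := (greedyLim_sigmaG ⟨_, hlim⟩).unique hlim
  refine ⟨⟨hf₀.add hg₀, _, hlim⟩, hsigma, iSup₂_le fun B hB => ?_⟩
  obtain ⟨G, hG, -, hGB⟩ := (GreedySet.empty f).exists_superset_card_eq hf₀ (Nat.zero_le B.card)
  obtain ⟨G', hG', -, hG'B⟩ :=
    (GreedySet.empty g).exists_superset_card_eq hg₀ (Nat.zero_le B.card)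
  have hρ : ∀ φ : ℕ → ℝ, ((B.card + 1 : ℕ) : ℝ≥0∞) * Drearr φ (B.card + 1) ≤ rho φ 0 :=
    fun φ => mul_Drearr_le_rho φ (Nat.le_add_left 1 _)
  rw [hsigma, ← Real.enorm_eq_ofReal_abs]
  refine (enorm_sub_oneStar_add_le _ _ hB hG hG' hGB hG'B (hρ _) (hρ f) (hρ g)).trans ?_
  gcongr
  exacts [enorm_sigmaG_sub_oneStar_le_ANorm hG, enorm_sigmaG_sub_oneStar_le_ANorm hG']
end
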